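/- For every positive integer k with 1 ≤ k ≤ n, among all k-node summary trees of a node-weighted rooted n-node tree T there exists one of maximum entropy in which, for every node v whose group node other_v exists, the set other_v is either a prefix or a near-prefix of the children of v sorted in nondecreasing order by subtree weight. Here a near-prefix is a set of the form {v₁,…,v_i} ∪ {v_j} with j ≥ i+2. -/

import Mathlib

/-- A rooted tree with real node weights and an ordered list of children. -/
inductive WTree where
  | node : ℝ → List WTree → WTree

mutual
/-- Total weight (size) of the subtree. -/
def WTree.wt : WTree → ℝ
  | .node w cs => w + WTree.wtList cs
def WTree.wtList : List WTree → ℝ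
  | [] => 0
  | t :: ts => WTree.wt t + WTree.wtList ts
end

mutual
/-- Number of nodes of the tree. -/
def WTree.size : WTree → ℕ
  | .node _ cs => 1 + WTree.sizeList cs
def WTree.sizeList : List WTree → ℕ
  | [] => 0
  | t :: ts => WTree.size t + WTree.sizeList ts
end

/-- A summary tree of a subtree: either the whole subtree collapsed to a single node,
or the root kept as a singleton together with, for each child, either a summary of the
child's subtree (`some s`) or membership of that child in the single group node
`other_v` (`none`). -/
inductive Summ where
  | leafAll : Summ
  | expand : List (Option Summ) → Summ

/-- `Valid t s` : `s` is a summary tree of the tree `t`. -/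
inductive Valid : WTree → Summ → Prop
  | all (t : WTree) : Valid t .leafAll
  | expand (w : ℝ) (cs : List WTree) (subs : List (Option Summ))
      (h : List.Forall₂ (fun c os => ∀ s, os = some s → Valid c s) cs subs) :
      Valid (.node w cs) (.expand subs)

mutual
/-- The number of nodes of a summary tree. -/
def Summ.count : Summ → ℕ
  | .leafAll => 1
  | .expand subs => 1 + (if subs.any Option.isNone then 1 else 0) + Summ.countList subs
def Summ.countList : List (Option Summ) → ℕ
  | [] => 0
  | none :: rest => Summ.countList rest
  | some s :: rest => Summ.count s + Summ.countList rest
end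

/-- Total weight of the children placed in the group node `other_v`. -/
def otherWeight : List WTree → List (Option Summ) → ℝ
  | _, [] => 0
  | [], _ :: _ => 0
  | c :: cs, os :: rest => (if os.isNone then WTree.wt c else 0) + otherWeight cs rest

mutual
/-- The list of node weights of a summary tree of `t`. -/
def parts : WTree → Summ → List ℝ
  | t, .leafAll => [WTree.wt t]
  | .node w cs, .expand subs =>
      w :: ((if subs.any Option.isNone then [otherWeight cs subs] else [])
        ++ partsList cs subs)
def partsList : List WTree → List (Option Summ) → List ℝ
  | _, [] => []
  | [], _ :: _ => []
  | _ :: cs, none :: rest => partsList cs rest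
  | c :: cs, some s :: rest => parts c s ++ partsList cs rest
end

/-- The entropy `-Σ (Wᵢ/W)·lg(Wᵢ/W)` of a list of node weights, `W` the total weight. -/
noncomputable def listEntropy (W : ℝ) (l : List ℝ) : ℝ :=
  -((l.map (fun x => x / W * Real.logb 2 (x / W))).sum)

/-- `Occurs s' s` : the summary node `s'` occurs somewhere within the summary tree `s`. -/
inductive Occurs : Summ → Summ → Prop
  | refl (s : Summ) : Occurs s s
  | step (s' s : Summ) (subs : List (Option Summ)) :
      some s ∈ subs → Occurs s' s → Occurs s' (.expand subs)

/-- `AllNodes P t` : the predicate `P` (of the weight and children list) holds at every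
node of `t`. -/
inductive WTree.AllNodes (P : ℝ → List WTree → Prop) : WTree → Prop
  | mk (w : ℝ) (cs : List WTree) : P w cs → (∀ c ∈ cs, WTree.AllNodes P c) →
      WTree.AllNodes P (.node w cs)

/-- The trues of the boolean list (marking children put into `other_v`, the children
being listed in nondecreasing order of size) form a prefix `{v₁,…,vᵢ}`, or a
near-prefix `{v₁,…,vᵢ} ∪ {v_j}` with `j ≥ i+2` (0-indexed: `{m : m < i} ∪ {j}`,
`j ≥ i+1`). -/
def NearPrefix (l : List Bool) : Prop :=
  (∃ i, ∀ m (h : m < l.length), (l[m] = true ↔ m < i)) ∨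
  (∃ i j, i + 1 ≤ j ∧ j < l.length ∧
    ∀ m (h : m < l.length), (l[m] = true ↔ (m < i ∨ m = j)))

/-!
Induct on the tree. At a node `v`, start from any maximum-entropy `k`-node summary and replace
the summary of each child by a maximum-entropy one of the same size whose group nodes are
(near-)prefixes, which exists by induction; this keeps the size and cannot lower the entropy.
If `other_v` is still neither a prefix nor a near-prefix, there are children `a < b < b'` with
`a` outside and `b, b'` inside the group, so `wt a ≤ wt b` and `2 wt b ≤ wt other_v`. Take `b`
out of the group as a single node and, if `a` is a single node, put `a` into the group: by
concavity of `-x lg x` the entropy does not drop. Otherwise remove one node from the summary of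
`a`; this costs at most `wt a / W` of entropy, while splitting `b` off the group gains at least
`wt b / W`. The size is unchanged and the sum of the indices of the group's children decreases,
so repeating the exchange ends with a prefix or near-prefix group.
-/

open Real Finset

/-! ## Entropy of merged and split parts -/

noncomputable def entropyTerm (W x : ℝ) : ℝ := -(x / W * logb 2 (x / W))

@[simp] lemma entropyTerm_zero (W : ℝ) : entropyTerm W 0 = 0 := by simp [entropyTerm]

lemma entropyTerm_add_sub_eq {W x y : ℝ} (hW : 0 < W) (hx : 0 ≤ x) (hy : 0 ≤ y) :
    entropyTerm W x + entropyTerm W y - entropyTerm W (x + y)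
      = (x + y) * binEntropy (x / (x + y)) / (W * log 2) := by
  rcases hx.eq_or_lt with rfl | hx
  · simp
  rcases hy.eq_or_lt with rfl | hy
  · simp [div_self hx.ne']
  have h1 : 1 - x / (x + y) = y / (x + y) := by field_simp; ring
  rw [binEntropy, h1]
  simp only [entropyTerm, logb, log_div hx.ne' hW.ne', log_div hy.ne' hW.ne',
    log_div (by positivity : x + y ≠ 0) hW.ne', log_inv,
    log_div hx.ne' (by positivity : x + y ≠ 0), log_div hy.ne' (by positivity : x + y ≠ 0)]
  field_simp
  ring

lemma binEntropy_le_binEntropy {p q : ℝ} (hp : 0 ≤ p) (hpq : p ≤ q) (hpq' : p ≤ 1 - q) :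
    binEntropy p ≤ binEntropy q := by
  have hp2 : p ∈ Set.Icc 0 2⁻¹ := ⟨hp, by linarith⟩
  rcases le_total q 2⁻¹ with hq | hq
  · exact binEntropy_strictMonoOn.monotoneOn hp2 ⟨hp.trans hpq, hq⟩ hpq
  · rw [← binEntropy_one_sub q]
    exact binEntropy_strictMonoOn.monotoneOn hp2 ⟨hp.trans hpq', by linarith⟩ hpq'

lemma mul_log_two_le_binEntropy {p : ℝ} (hp : 0 ≤ p) (hp2 : p ≤ 2⁻¹) :
    p * log 2 ≤ binEntropy p := by
  rw [binEntropy]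
  have h1 : 0 ≤ (1 - p) * log (1 - p)⁻¹ :=
    mul_nonneg (by linarith) (log_nonneg (one_le_inv₀ (by linarith) |>.2 (by linarith)))
  rcases hp.eq_or_lt with rfl | hp
  · simp
  have h2 : p * log 2 ≤ p * log p⁻¹ :=
    mul_le_mul_of_nonneg_left (log_le_log two_pos ((le_inv_comm₀ two_pos hp).2 hp2)) hp.le
  linarith

section entropyTerm

variable {W : ℝ}

lemma entropyTerm_add_sub_le (hW : 0 < W) {x y : ℝ} (hx : 0 ≤ x) (hy : 0 ≤ y) :
    entropyTerm W x + entropyTerm W y - entropyTerm W (x + y) ≤ (x + y) / W := by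
  rw [entropyTerm_add_sub_eq hW hx hy, div_le_div_iff₀ (by positivity) hW]
  have := mul_le_mul_of_nonneg_left (binEntropy_le_log_two (p := x / (x + y)))
    (by positivity : 0 ≤ (x + y) * W)
  linarith

lemma div_le_entropyTerm_add_sub (hW : 0 < W) {u g : ℝ} (hu : 0 ≤ u) (hug : 2 * u ≤ g) :
    u / W ≤ entropyTerm W u + entropyTerm W (g - u) - entropyTerm W g := by
  have key := entropyTerm_add_sub_eq hW hu (by linarith : 0 ≤ g - u)
  rw [add_sub_cancel] at key
  rw [key, div_le_div_iff₀ hW (by positivity)]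
  rcases (by linarith : 0 ≤ g).eq_or_lt with rfl | hg
  · simp [show u = 0 by linarith]
  have := mul_le_mul_of_nonneg_left (mul_log_two_le_binEntropy (p := u / g) (by positivity)
    (by rw [div_le_iff₀ hg]; linarith)) (by positivity : 0 ≤ g * W)
  rw [← mul_assoc, mul_comm g W, mul_assoc W, mul_div_cancel₀ _ hg.ne'] at this
  linarith

lemma entropyTerm_add_le_of_le (hW : 0 < W) {a b g : ℝ} (ha : 0 ≤ a) (hab : a ≤ b)
    (hbg : b ≤ g) :
    entropyTerm W a + entropyTerm W g ≤ entropyTerm W b + entropyTerm W (g + a - b) := by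
  have h1 := entropyTerm_add_sub_eq hW ha (by linarith : 0 ≤ g)
  have h2 := entropyTerm_add_sub_eq hW (by linarith : 0 ≤ b) (by linarith : 0 ≤ g + a - b)
  rw [show b + (g + a - b) = a + g by ring] at h2
  rcases (by linarith : 0 ≤ a + g).eq_or_lt with hS | hS
  · simp [show a = 0 by linarith, show g = 0 by linarith, show b = 0 by linarith]
  have hH : binEntropy (a / (a + g)) ≤ binEntropy (b / (a + g)) := by
    apply binEntropy_le_binEntropy (by positivity) (by gcongr)
    rw [le_sub_iff_add_le, ← add_div, div_le_one hS]
    linarith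
  have := div_le_div_of_nonneg_right (mul_le_mul_of_nonneg_left hH hS.le)
    (by positivity : 0 ≤ W * log 2)
  linarith

end entropyTerm

/-! ## Lists -/

lemma List.getD_set_self {α : Type*} {l : List α} {i : ℕ} (a d : α) (hi : i < l.length) :
    (l.set i a).getD i d = a := by
  grind

lemma List.getD_set_of_ne {α : Type*} {l : List α} {i j : ℕ} (a d : α) (hij : i ≠ j) :
    (l.set i a).getD j d = l.getD j d := by
  grind

lemma List.getD_mem {α : Type*} {l : List α} {i : ℕ} (d : α) (hi : i < l.length) :
    l.getD i d ∈ l := by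
  rw [List.getD_eq_getElem _ _ hi]
  exact List.getElem_mem _

lemma List.lt_length_of_getD_eq_some {α : Type*} {l : List (Option α)} {i : ℕ} {a : α}
    (h : l.getD i none = some a) : i < l.length := by
  by_contra hi
  rw [List.getD_eq_default _ _ (by omega)] at h
  cases h

lemma List.some_mem_of_getD_eq_some {α : Type*} {l : List (Option α)} {i : ℕ} {a : α}
    (h : l.getD i none = some a) : some a ∈ l := by
  rw [← h, List.getD_eq_getElem _ _ (List.lt_length_of_getD_eq_some h)]
  exact List.getElem_mem _

lemma List.any_isNone_iff {α : Type*} {l : List (Option α)} :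
    l.any Option.isNone ↔ ∃ i < l.length, l.getD i none = none := by
  simp only [List.any_eq_true, Option.isNone_iff_eq_none, exists_eq_right,
    List.mem_iff_getElem]
  constructor
  · rintro ⟨i, hi, h⟩
    exact ⟨i, hi, by rw [List.getD_eq_getElem _ _ hi, h]⟩
  · rintro ⟨i, hi, h⟩
    exact ⟨i, hi, by rw [← h, List.getD_eq_getElem _ _ hi]⟩

lemma eq_sum_range_getD {α β M : Type*} [AddCommMonoid M] (F : List α → List β → M)
    (g : α → β → M) (dα : α) (dβ : β) (hnil : F [] [] = 0)
    (hcons : ∀ a as b bs, F (a :: as) (b :: bs) = g a b + F as bs) :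
    ∀ {as : List α} {bs : List β}, as.length = bs.length →
      F as bs = ∑ j ∈ range bs.length, g (as.getD j dα) (bs.getD j dβ)
  | [], [], _ => by simpa using hnil
  | a :: as, b :: bs, h => by
    rw [hcons, eq_sum_range_getD F g dα dβ hnil hcons (by simpa using h), List.length_cons,
      sum_range_succ']
    simp [add_comm]

lemma sum_range_getD_set {α M : Type*} [AddCommMonoid M] (f : ℕ → α → M) {l : List α}
    {i : ℕ} (hi : i < l.length) (a d : α) :
    ∑ j ∈ range l.length, f j ((l.set i a).getD j d) + f i (l.getD i d)
      = ∑ j ∈ range l.length, f j (l.getD j d) + f i a := by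
  have hmem := mem_range.2 hi
  rw [← sum_erase_add _ _ hmem, ← sum_erase_add _ _ hmem, List.getD_set_self a d hi,
    sum_congr rfl fun j hj => by rw [List.getD_set_of_ne a d (ne_of_mem_erase hj).symm]]
  abel

lemma Finset.add_le_sum_of_ne {ι M : Type*} [DecidableEq ι] [AddCommMonoid M] [PartialOrder M]
    [IsOrderedAddMonoid M] {s : Finset ι} {f : ι → M} (hf : ∀ k ∈ s, 0 ≤ f k) {i j : ι}
    (hi : i ∈ s) (hj : j ∈ s) (hij : i ≠ j) : f i + f j ≤ ∑ k ∈ s, f k := by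
  rw [← sum_pair hij]
  exact sum_le_sum_of_subset_of_nonneg (by simp [insert_subset_iff, hi, hj]) fun k hk _ => hf k hk

/-! ## Trees and summary trees -/

instance : Inhabited WTree := ⟨.node 0 []⟩

theorem WTree.induction {P : WTree → Prop}
    (node : ∀ w cs, (∀ c ∈ cs, P c) → P (.node w cs)) (t : WTree) : P t :=
  WTree.rec (motive_2 := fun cs => ∀ c ∈ cs, P c) node (List.forall_mem_nil _)
    (fun _ _ hc hcs => List.forall_mem_cons.2 ⟨hc, hcs⟩) t

theorem Summ.induction {P : Summ → Prop} (leafAll : P .leafAll)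
    (expand : ∀ subs, (∀ s, some s ∈ subs → P s) → P (.expand subs)) (s : Summ) : P s :=
  Summ.rec (motive_2 := fun subs => ∀ s, some s ∈ subs → P s)
    (motive_3 := fun o => ∀ s, o = some s → P s) leafAll expand (by simp)
    (fun _ _ ho hsubs s hs => (List.mem_cons.1 hs).elim (fun h => ho s h.symm) (hsubs s)) (by simp)
    (fun _ hs _ h => Option.some_inj.1 h ▸ hs) s

namespace WTree

lemma allNodes_node_iff {P : ℝ → List WTree → Prop} {w : ℝ} {cs : List WTree} :
    AllNodes P (.node w cs) ↔ P w cs ∧ ∀ c ∈ cs, AllNodes P c :=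
  ⟨fun | .mk _ _ h hcs => ⟨h, hcs⟩, fun ⟨h, hcs⟩ => .mk w cs h hcs⟩

abbrev NonnegWeights (t : WTree) : Prop := t.AllNodes fun w _ => 0 ≤ w

lemma wtList_eq_sum (cs : List WTree) : wtList cs = (cs.map wt).sum := by
  induction cs with
  | nil => rfl
  | cons c cs ih => simp [wtList, ih]

lemma wtList_nonneg {cs : List WTree} (h : ∀ c ∈ cs, 0 ≤ c.wt) : 0 ≤ wtList cs := by
  rw [wtList_eq_sum]
  exact List.sum_nonneg (by simpa using h)

lemma wt_nonneg (t : WTree) (h : t.NonnegWeights) : 0 ≤ t.wt := by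
  induction t using WTree.induction with
  | node w cs ih =>
    obtain ⟨hw, hcs⟩ := allNodes_node_iff.1 h
    have := wtList_nonneg fun c hc => ih c hc (hcs c hc)
    rw [wt]
    linarith

lemma one_le_size (t : WTree) : 1 ≤ t.size := by
  cases t
  simp [size]

lemma NonnegWeights.root {w : ℝ} {cs : List WTree} (h : (node w cs).NonnegWeights) :
    0 ≤ w :=
  (allNodes_node_iff.1 h).1

lemma NonnegWeights.children {w : ℝ} {cs : List WTree} (h : (node w cs).NonnegWeights) :
    ∀ c ∈ cs, c.NonnegWeights :=
  (allNodes_node_iff.1 h).2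

lemma NonnegWeights.children_wt {w : ℝ} {cs : List WTree} (h : (node w cs).NonnegWeights) :
    ∀ c ∈ cs, 0 ≤ c.wt :=
  fun c hc => c.wt_nonneg (h.children c hc)

end WTree

lemma Summ.one_le_count (s : Summ) : 1 ≤ s.count := by
  cases s <;> rw [Summ.count]
  omega

@[simp] lemma listEntropy_nil (W : ℝ) : listEntropy W [] = 0 := by simp [listEntropy]

lemma listEntropy_cons (W a : ℝ) (l : List ℝ) :
    listEntropy W (a :: l) = entropyTerm W a + listEntropy W l := by
  simp [listEntropy, entropyTerm]
  ring

lemma listEntropy_append (W : ℝ) (l₁ l₂ : List ℝ) :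
    listEntropy W (l₁ ++ l₂) = listEntropy W l₁ + listEntropy W l₂ := by
  simp [listEntropy]
  ring

@[simp] lemma listEntropy_singleton (W a : ℝ) : listEntropy W [a] = entropyTerm W a := by
  simp [listEntropy_cons]

lemma parts_leafAll (t : WTree) : parts t .leafAll = [t.wt] := by
  cases t
  simp [parts]

lemma listEntropy_parts_expand (W w : ℝ) (cs : List WTree) (subs : List (Option Summ)) :
    listEntropy W (parts (.node w cs) (.expand subs)) =
      entropyTerm W w + (if subs.any Option.isNone then entropyTerm W (otherWeight cs subs) else 0)
        + listEntropy W (partsList cs subs) := by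
  rw [parts, listEntropy_cons]
  split
  · simp [listEntropy_cons]
    ring
  · simp

/-! ## Summary trees entry by entry -/

def optCount : Option Summ → ℕ
  | none => 0
  | some s => s.count

def groupWeight : WTree → Option Summ → ℝ
  | c, none => c.wt
  | _, some _ => 0

noncomputable def optEntropy (W : ℝ) : WTree → Option Summ → ℝ
  | _, none => 0
  | c, some s => listEntropy W (parts c s)

def groupIndex : ℕ → Option Summ → ℕ
  | j, none => j
  | _, some _ => 0

def groupIndexSum (subs : List (Option Summ)) : ℕ :=
  ∑ j ∈ range subs.length, groupIndex j (subs.getD j none)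

lemma countList_eq (subs : List (Option Summ)) :
    Summ.countList subs = ∑ j ∈ range subs.length, optCount (subs.getD j none) :=
  eq_sum_range_getD (fun (_ : List (Option Summ)) subs => Summ.countList subs)
    (fun _ o => optCount o) none none rfl
    (fun _ _ o _ => by cases o <;> simp [Summ.countList, optCount]) (as := subs) rfl

lemma sizeList_eq {cs : List WTree} {subs : List (Option Summ)} (h : cs.length = subs.length) :
    WTree.sizeList cs = ∑ j ∈ range subs.length, (cs.getD j default).size :=
  eq_sum_range_getD (fun cs _ => WTree.sizeList cs) (fun c _ => c.size) default none rfl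
    (fun _ _ _ _ => rfl) h

lemma wtList_eq {cs : List WTree} {subs : List (Option Summ)} (h : cs.length = subs.length) :
    WTree.wtList cs = ∑ j ∈ range subs.length, (cs.getD j default).wt :=
  eq_sum_range_getD (fun cs _ => WTree.wtList cs) (fun c _ => c.wt) default none rfl
    (fun _ _ _ _ => rfl) h

lemma otherWeight_eq {cs : List WTree} {subs : List (Option Summ)} (h : cs.length = subs.length) :
    otherWeight cs subs
      = ∑ j ∈ range subs.length, groupWeight (cs.getD j default) (subs.getD j none) :=
  eq_sum_range_getD otherWeight groupWeight default none rfl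
    (fun _ _ o _ => by cases o <;> simp [otherWeight, groupWeight]) h

lemma listEntropy_partsList_eq (W : ℝ) {cs : List WTree} {subs : List (Option Summ)}
    (h : cs.length = subs.length) :
    listEntropy W (partsList cs subs)
      = ∑ j ∈ range subs.length, optEntropy W (cs.getD j default) (subs.getD j none) :=
  eq_sum_range_getD (fun cs subs => listEntropy W (partsList cs subs)) (optEntropy W) default none
    (by simp [partsList])
    (fun _ _ o _ => by cases o <;> simp [partsList, optEntropy, listEntropy_append]) h

lemma valid_expand_iff {w : ℝ} {cs : List WTree} {subs : List (Option Summ)} :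
    Valid (.node w cs) (.expand subs) ↔ cs.length = subs.length ∧
      ∀ i s, subs.getD i none = some s → Valid (cs.getD i default) s := by
  constructor
  · intro hv
    cases hv with
    | expand _ _ _ h =>
      obtain ⟨hlen, hget⟩ := List.forall₂_iff_get.1 h
      refine ⟨hlen, fun i s hs => ?_⟩
      have hi := List.lt_length_of_getD_eq_some hs
      rw [List.getD_eq_getElem _ _ hi] at hs
      rw [List.getD_eq_getElem _ _ (hlen ▸ hi)]
      exact hget i _ hi s hs
  · rintro ⟨hlen, h⟩
    refine .expand w cs subs (List.forall₂_iff_get.2 ⟨hlen, fun i h₁ h₂ s hs => ?_⟩)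
    have := h i s (by rw [List.getD_eq_getElem _ _ h₂]; exact hs)
    rwa [List.getD_eq_getElem _ _ h₁] at this

section SetEntry

variable {w : ℝ} {cs : List WTree} {subs : List (Option Summ)} {i : ℕ} (o : Option Summ)

lemma Valid.set (hv : Valid (.node w cs) (.expand subs))
    (ho : ∀ s, o = some s → Valid (cs.getD i default) s) :
    Valid (.node w cs) (.expand (subs.set i o)) := by
  obtain ⟨hlen, hval⟩ := valid_expand_iff.1 hv
  refine valid_expand_iff.2 ⟨by simpa using hlen, fun j s hs => ?_⟩
  rcases eq_or_ne i j with rfl | hij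
  · rw [List.getD_set_self o none (List.lt_length_of_getD_eq_some hs |>.trans_eq
      (List.length_set ..))] at hs
    exact ho s hs
  · exact hval j s (by rwa [List.getD_set_of_ne o none hij] at hs)

lemma countList_set (hi : i < subs.length) :
    Summ.countList (subs.set i o) + optCount (subs.getD i none)
      = Summ.countList subs + optCount o := by
  rw [countList_eq, countList_eq, List.length_set]
  exact sum_range_getD_set (fun _ => optCount) hi o none

lemma groupIndexSum_set (hi : i < subs.length) :
    groupIndexSum (subs.set i o) + groupIndex i (subs.getD i none)
      = groupIndexSum subs + groupIndex i o := by
  rw [groupIndexSum, groupIndexSum, List.length_set]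
  exact sum_range_getD_set groupIndex hi o none

lemma otherWeight_set (hlen : cs.length = subs.length) (hi : i < subs.length) :
    otherWeight cs (subs.set i o) + groupWeight (cs.getD i default) (subs.getD i none)
      = otherWeight cs subs + groupWeight (cs.getD i default) o := by
  rw [otherWeight_eq hlen, otherWeight_eq (by simpa using hlen), List.length_set]
  exact sum_range_getD_set (fun j => groupWeight (cs.getD j default)) hi o none

lemma listEntropy_partsList_set (W : ℝ) (hlen : cs.length = subs.length) (hi : i < subs.length) :
    listEntropy W (partsList cs (subs.set i o))
        + optEntropy W (cs.getD i default) (subs.getD i none)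
      = listEntropy W (partsList cs subs) + optEntropy W (cs.getD i default) o := by
  rw [listEntropy_partsList_eq W hlen, listEntropy_partsList_eq W (by simpa using hlen),
    List.length_set]
  exact sum_range_getD_set (fun j => optEntropy W (cs.getD j default)) hi o none

end SetEntry

lemma any_isNone_set_some {subs : List (Option Summ)} {i : ℕ} {s s' : Summ}
    (hi : subs.getD i none = some s) :
    (subs.set i (some s')).any Option.isNone = subs.any Option.isNone := by
  have key : ∀ k, (subs.set i (some s')).getD k none = none ↔ subs.getD k none = none := by
    intro k
    rcases eq_or_ne i k with rfl | hik
    · rw [List.getD_set_self _ _ (List.lt_length_of_getD_eq_some hi), hi]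
      simp
    · rw [List.getD_set_of_ne _ _ hik]
  rw [Bool.eq_iff_iff, List.any_isNone_iff, List.any_isNone_iff, List.length_set]
  simp only [key]

lemma count_le_size (s : Summ) {t : WTree} (hv : Valid t s) : s.count ≤ t.size := by
  induction s using Summ.induction generalizing t with
  | leafAll => exact t.one_le_size
  | expand subs ih =>
    obtain ⟨w, cs⟩ := t
    obtain ⟨hlen, hval⟩ := valid_expand_iff.1 hv
    have hle : ∀ j ∈ range subs.length,
        optCount (subs.getD j none) ≤ (cs.getD j default).size := by
      intro j _
      cases hj : subs.getD j none with
      | none => exact Nat.zero_le _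
      | some s => exact ih s (List.some_mem_of_getD_eq_some hj) (hval j s hj)
    rw [Summ.count, WTree.size, countList_eq, sizeList_eq hlen]
    split
    · obtain ⟨i, hi, hnone⟩ := List.any_isNone_iff.1 ‹_›
      have := sum_lt_sum hle ⟨i, mem_range.2 hi, by
        rw [hnone]; exact (cs.getD i default).one_le_size⟩
      omega
    · have := sum_le_sum hle
      omega

lemma parts_of_count_eq_one {t : WTree} {s : Summ} (hv : Valid t s) (hc : s.count = 1) :
    parts t s = [t.wt] := by
  obtain _ | subs := s
  · exact parts_leafAll t
  obtain ⟨w, cs⟩ := t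
  obtain ⟨hlen, -⟩ := valid_expand_iff.1 hv
  obtain _ | ⟨_ | s, subs⟩ := subs
  · obtain rfl : cs = [] := List.eq_nil_of_length_eq_zero hlen
    simp [parts, partsList, WTree.wt, WTree.wtList]
  · simp [Summ.count] at hc
    omega
  · have := s.one_le_count
    simp [Summ.count, Summ.countList] at hc
    omega

lemma optEntropy_of_count_eq_one (W : ℝ) {c : WTree} {s : Summ} (hv : Valid c s)
    (hs : s.count = 1) :
    optEntropy W c (some s) = entropyTerm W c.wt := by
  rw [optEntropy, parts_of_count_eq_one hv hs, listEntropy_singleton]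

lemma groupWeight_nonneg {c : WTree} (hc : 0 ≤ c.wt) (o : Option Summ) :
    0 ≤ groupWeight c o := by
  cases o <;> simp [groupWeight, hc]

lemma groupWeight_le {c : WTree} (hc : 0 ≤ c.wt) (o : Option Summ) :
    groupWeight c o ≤ c.wt := by
  cases o <;> simp [groupWeight, hc]

section GroupWeight

variable {cs : List WTree} {subs : List (Option Summ)}

lemma wt_getD_le_wtList (hcs : ∀ c ∈ cs, 0 ≤ c.wt) {j : ℕ} (hj : j < cs.length) :
    (cs.getD j default).wt ≤ WTree.wtList cs := by
  rw [WTree.wtList_eq_sum]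
  exact List.single_le_sum (by simpa using hcs) _ (List.mem_map_of_mem (List.getD_mem _ hj))

lemma wt_add_wt_le_otherWeight (hlen : cs.length = subs.length)
    (hcs : ∀ c ∈ cs, 0 ≤ c.wt) {i j : ℕ} (hij : i ≠ j)
    (hi : subs.getD i none = none) (hj : subs.getD j none = none) (hi' : i < subs.length)
    (hj' : j < subs.length) :
    (cs.getD i default).wt + (cs.getD j default).wt ≤ otherWeight cs subs := by
  rw [otherWeight_eq hlen]
  have := add_le_sum_of_ne (f := fun k => groupWeight (cs.getD k default) (subs.getD k none))
    (fun k hk => groupWeight_nonneg (hcs _ (List.getD_mem _ (by simpa [hlen] using hk))) _)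
    (mem_range.2 hi') (mem_range.2 hj') hij
  rwa [hi, hj] at this

lemma otherWeight_add_wt_le_wtList (hlen : cs.length = subs.length)
    (hcs : ∀ c ∈ cs, 0 ≤ c.wt) {j : ℕ} (hj : j < subs.length)
    (hsome : subs.getD j none ≠ none) :
    otherWeight cs subs + (cs.getD j default).wt ≤ WTree.wtList cs := by
  obtain ⟨s, hs⟩ := Option.ne_none_iff_exists'.1 hsome
  rw [otherWeight_eq hlen, wtList_eq hlen, ← sum_erase_add _ _ (mem_range.2 hj),
    ← sum_erase_add _ (fun k => (cs.getD k default).wt) (mem_range.2 hj), hs, groupWeight,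
    add_zero]
  gcongr with k hk
  exact groupWeight_le (hcs _ (List.getD_mem _ (by simpa [hlen] using mem_of_mem_erase hk))) _

lemma otherWeight_nonneg (hlen : cs.length = subs.length) (hcs : ∀ c ∈ cs, 0 ≤ c.wt) :
    0 ≤ otherWeight cs subs := by
  rw [otherWeight_eq hlen]
  exact sum_nonneg fun k hk =>
    groupWeight_nonneg (hcs _ (List.getD_mem _ (by simpa [hlen] using hk))) _

lemma otherWeight_eq_zero (hlen : cs.length = subs.length) (hany : ¬ subs.any Option.isNone) :
    otherWeight cs subs = 0 := by
  rw [otherWeight_eq hlen]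
  refine sum_eq_zero fun j hj => ?_
  obtain ⟨s, hs⟩ := Option.ne_none_iff_exists'.1 fun h =>
    hany (List.any_isNone_iff.2 ⟨j, mem_range.1 hj, h⟩)
  rw [hs, groupWeight]

end GroupWeight

/-! ## Removing one node -/

section Coarsening

variable {W w : ℝ} {cs : List WTree} {subs : List (Option Summ)}

lemma count_expand_set_some {i : ℕ} {s s' : Summ} (hi : subs.getD i none = some s) :
    (Summ.expand (subs.set i (some s'))).count + s.count
      = (Summ.expand subs).count + s'.count := by
  have hcount := countList_set (some s') (List.lt_length_of_getD_eq_some hi)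
  rw [hi, optCount.eq_2, optCount.eq_2] at hcount
  rw [Summ.count, Summ.count, any_isNone_set_some hi]
  omega

lemma listEntropy_expand_set_some (hlen : cs.length = subs.length) {i : ℕ} {s s' : Summ}
    (hi : subs.getD i none = some s) :
    listEntropy W (parts (.node w cs) (.expand (subs.set i (some s'))))
        + listEntropy W (parts (cs.getD i default) s)
      = listEntropy W (parts (.node w cs) (.expand subs))
        + listEntropy W (parts (cs.getD i default) s') := by
  have hil := List.lt_length_of_getD_eq_some hi
  have hweight := otherWeight_set (some s') hlen hil
  have hent := listEntropy_partsList_set (some s') W hlen hil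
  rw [hi, groupWeight.eq_2, groupWeight.eq_2, add_zero, add_zero] at hweight
  rw [hi, optEntropy.eq_2, optEntropy.eq_2] at hent
  rw [listEntropy_parts_expand, listEntropy_parts_expand, any_isNone_set_some hi, hweight]
  linarith

lemma merge_collapsed_child_into_group (hW : 0 < W) (hnn : (WTree.node w cs).NonnegWeights)
    (hv : Valid (.node w cs) (.expand subs)) (hany : subs.any Option.isNone) {j : ℕ} {s : Summ}
    (hj : subs.getD j none = some s) (hs : s.count = 1) :
    (Summ.expand (subs.set j none)).count + 1 = (Summ.expand subs).count ∧
      listEntropy W (parts (.node w cs) (.expand subs)) - (WTree.node w cs).wt / W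
        ≤ listEntropy W (parts (.node w cs) (.expand (subs.set j none))) := by
  obtain ⟨hlen, hval⟩ := valid_expand_iff.1 hv
  have hjl := List.lt_length_of_getD_eq_some hj
  have hany' : (subs.set j none).any Option.isNone :=
    List.any_isNone_iff.2 ⟨j, by simpa using hjl, List.getD_set_self _ _ hjl⟩
  have hcount := countList_set none hjl
  have hweight := otherWeight_set none hlen hjl
  have hent := listEntropy_partsList_set none W hlen hjl
  rw [hj, optEntropy_of_count_eq_one W (hval j s hj) hs] at hent
  simp only [hj, optCount, groupWeight, optEntropy] at hcount hweight hent
  simp only [Summ.count, listEntropy_parts_expand, hany, hany', if_true]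
  refine ⟨by omega, ?_⟩
  have hcs := hnn.children_wt
  have hbound := otherWeight_add_wt_le_wtList hlen hcs hjl (by rw [hj]; exact Option.some_ne_none s)
  have hmerge := entropyTerm_add_sub_le hW (otherWeight_nonneg hlen hcs)
    (hcs _ (List.getD_mem default (hlen ▸ hjl)))
  have : (otherWeight cs subs + (cs.getD j default).wt) / W ≤ (WTree.node w cs).wt / W := by
    rw [WTree.wt]
    exact div_le_div_of_nonneg_right (by linarith [hnn.root]) hW.le
  rw [show otherWeight cs (subs.set j none) = otherWeight cs subs + (cs.getD j default).wt by
    linarith]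
  linarith

lemma collapse_of_forall_none (hW : 0 < W) (hnn : (WTree.node w cs).NonnegWeights)
    (hv : Valid (.node w cs) (.expand subs)) (hany : subs.any Option.isNone)
    (hall : ∀ j, subs.getD j none = none) :
    Summ.leafAll.count + 1 = (Summ.expand subs).count ∧
      listEntropy W (parts (.node w cs) (.expand subs)) - (WTree.node w cs).wt / W
        ≤ listEntropy W (parts (.node w cs) .leafAll) := by
  obtain ⟨hlen, -⟩ := valid_expand_iff.1 hv
  have hcount : Summ.countList subs = 0 := by
    rw [countList_eq]
    exact sum_eq_zero fun j _ => by rw [hall j, optCount]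
  have hweight : otherWeight cs subs = WTree.wtList cs := by
    rw [otherWeight_eq hlen, wtList_eq hlen]
    exact sum_congr rfl fun j _ => by rw [hall j, groupWeight]
  have hent : listEntropy W (partsList cs subs) = 0 := by
    rw [listEntropy_partsList_eq W hlen]
    exact sum_eq_zero fun j _ => by rw [hall j, optEntropy]
  constructor
  · simp [Summ.count, hany, hcount]
  · simp only [listEntropy_parts_expand, hany, if_true, hweight, hent, parts_leafAll,
      listEntropy_singleton, WTree.wt]
    linarith [entropyTerm_add_sub_le hW hnn.root (WTree.wtList_nonneg hnn.children_wt)]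

lemma open_group_with_collapsed_child (hv : Valid (.node w cs) (.expand subs))
    (hany : ¬ subs.any Option.isNone) {j : ℕ} {s : Summ} (hj : subs.getD j none = some s)
    (hs : s.count = 1) :
    (Summ.expand (subs.set j none)).count = (Summ.expand subs).count ∧
      listEntropy W (parts (.node w cs) (.expand (subs.set j none)))
        = listEntropy W (parts (.node w cs) (.expand subs)) := by
  obtain ⟨hlen, hval⟩ := valid_expand_iff.1 hv
  have hjl := List.lt_length_of_getD_eq_some hj
  have hany' : (subs.set j none).any Option.isNone :=
    List.any_isNone_iff.2 ⟨j, by simpa using hjl, List.getD_set_self _ _ hjl⟩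
  have hcount := countList_set none hjl
  have hweight := otherWeight_set none hlen hjl
  have hent := listEntropy_partsList_set none W hlen hjl
  rw [hj, optEntropy_of_count_eq_one W (hval j s hj) hs] at hent
  simp only [hj, optCount, groupWeight, optEntropy, otherWeight_eq_zero hlen hany]
    at hcount hweight hent
  rw [Bool.not_eq_true] at hany
  simp only [Summ.count, listEntropy_parts_expand, hany', hany, Bool.false_eq_true, ↓reduceIte]
  constructor
  · omega
  · rw [show otherWeight cs (subs.set j none) = (cs.getD j default).wt by linarith]
    linarith

lemma exists_coarsening_of_group (hW : 0 < W) (hnn : (WTree.node w cs).NonnegWeights)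
    (hv : Valid (.node w cs) (.expand subs)) (hany : subs.any Option.isNone)
    (hcol : ∀ j s, subs.getD j none = some s → s.count = 1) :
    ∃ s', Valid (.node w cs) s' ∧ s'.count + 1 = (Summ.expand subs).count ∧
      listEntropy W (parts (.node w cs) (.expand subs)) - (WTree.node w cs).wt / W
        ≤ listEntropy W (parts (.node w cs) s') := by
  by_cases hsome : ∃ j s, subs.getD j none = some s
  · obtain ⟨j, s, hj⟩ := hsome
    exact ⟨_, hv.set none (by simp),
      merge_collapsed_child_into_group hW hnn hv hany hj (hcol j s hj)⟩
  · push Not at hsome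
    exact ⟨_, .all _, collapse_of_forall_none hW hnn hv hany
      fun j => Option.eq_none_iff_forall_ne_some.2 (hsome j)⟩

lemma exists_coarsening_of_collapsed (hW : 0 < W) (hnn : (WTree.node w cs).NonnegWeights)
    (hv : Valid (.node w cs) (.expand subs)) (hc : 2 ≤ (Summ.expand subs).count)
    (hcol : ∀ j s, subs.getD j none = some s → s.count = 1) :
    ∃ s', Valid (.node w cs) s' ∧ s'.count + 1 = (Summ.expand subs).count ∧
      listEntropy W (parts (.node w cs) (.expand subs)) - (WTree.node w cs).wt / W
        ≤ listEntropy W (parts (.node w cs) s') := by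
  by_cases hany : subs.any Option.isNone
  · exact exists_coarsening_of_group hW hnn hv hany hcol
  obtain ⟨s₀, h₀⟩ : ∃ s₀, subs.getD 0 none = some s₀ := by
    rcases subs with _ | ⟨_ | s₀, subs⟩
    · simp [Summ.count, Summ.countList] at hc
    · simp at hany
    · exact ⟨s₀, rfl⟩
  have h₀l := List.lt_length_of_getD_eq_some h₀
  -- Child `0` becomes the group node at no cost; then the group case applies.
  obtain ⟨hcount, hent⟩ :=
    open_group_with_collapsed_child (W := W) hv hany h₀ (hcol 0 s₀ h₀)
  obtain ⟨s', hv', hc', he'⟩ := exists_coarsening_of_group hW hnn (hv.set none (by simp))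
    (List.any_isNone_iff.2 ⟨0, by simpa using h₀l, List.getD_set_self _ _ h₀l⟩)
    (fun j s hj => hcol j s (by
      rwa [List.getD_set_of_ne _ _ (by
        rintro rfl
        rw [List.getD_set_self _ _ h₀l] at hj
        cases hj)] at hj))
  exact ⟨s', hv', by omega, by linarith⟩

end Coarsening

lemma exists_coarsening {W : ℝ} (hW : 0 < W) (s : Summ) {t : WTree} (hv : Valid t s)
    (hnn : t.NonnegWeights) (hc : 2 ≤ s.count) :
    ∃ s', Valid t s' ∧ s'.count + 1 = s.count ∧
      listEntropy W (parts t s) - t.wt / W ≤ listEntropy W (parts t s') := by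
  induction s using Summ.induction generalizing t with
  | leafAll => simp [Summ.count] at hc
  | expand subs ih =>
    obtain ⟨w, cs⟩ := t
    obtain ⟨hlen, hval⟩ := valid_expand_iff.1 hv
    by_cases hbig : ∃ i s, subs.getD i none = some s ∧ 2 ≤ s.count
    · obtain ⟨i, s, hi, hs⟩ := hbig
      have hil := List.lt_length_of_getD_eq_some hi
      obtain ⟨s', hv', hc', he'⟩ := ih s (List.some_mem_of_getD_eq_some hi) (hval i s hi)
        (hnn.children _ (List.getD_mem default (hlen ▸ hil))) hs
      have hcount := count_expand_set_some (s' := s') hi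
      have hent := listEntropy_expand_set_some (W := W) (w := w) (s' := s') hlen hi
      refine ⟨_, hv.set (i := i) (some s') fun _ h => Option.some_inj.1 h ▸ hv', by omega, ?_⟩
      have : (cs.getD i default).wt / W ≤ (WTree.node w cs).wt / W := by
        rw [WTree.wt]
        exact div_le_div_of_nonneg_right
          (by linarith [wt_getD_le_wtList hnn.children_wt (hlen ▸ hil), hnn.root]) hW.le
      linarith
    push Not at hbig
    exact exists_coarsening_of_collapsed hW hnn hv hc fun j s hj =>
      le_antisymm (Nat.le_of_lt_succ (hbig j s hj)) s.one_le_count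

/-! ## Maximum-entropy summaries -/

mutual
def WTree.fullSumm : WTree → Summ
  | .node _ cs => .expand (WTree.fullSummList cs)
def WTree.fullSummList : List WTree → List (Option Summ)
  | [] => []
  | c :: cs => some c.fullSumm :: WTree.fullSummList cs
end

lemma WTree.fullSummList_eq_map (cs : List WTree) :
    fullSummList cs = cs.map fun c => some c.fullSumm := by
  induction cs with
  | nil => rfl
  | cons c cs ih => rw [fullSummList, ih, List.map_cons]

lemma WTree.valid_fullSumm (t : WTree) : Valid t t.fullSumm := by
  induction t using WTree.induction with
  | node w cs ih =>
    rw [fullSumm, fullSummList_eq_map]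
    exact .expand w cs _ (List.forall₂_map_right_iff.2 (List.forall₂_same.2 fun c hc s hs =>
      Option.some_inj.1 hs ▸ ih c hc))

lemma WTree.count_fullSumm (t : WTree) : t.fullSumm.count = t.size := by
  induction t using WTree.induction with
  | node w cs ih =>
    have hcount : Summ.countList (cs.map fun c => some c.fullSumm) = sizeList cs := by
      induction cs with
      | nil => rfl
      | cons c cs ihcs =>
        rw [List.map_cons, Summ.countList, sizeList, ih c List.mem_cons_self,
          ihcs fun c hc => ih c (List.mem_cons_of_mem _ hc)]
    simp [fullSumm, fullSummList_eq_map, Summ.count, hcount, size]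

lemma exists_valid_count_eq {t : WTree} (hnn : t.NonnegWeights) {k : ℕ} (hk1 : 1 ≤ k)
    (hkn : k ≤ t.size) : ∃ s, Valid t s ∧ s.count = k := by
  obtain ⟨d, hd⟩ := Nat.exists_eq_add_of_le hkn
  induction d generalizing k with
  | zero => exact ⟨_, t.valid_fullSumm, by rw [t.count_fullSumm, hd, add_zero]⟩
  | succ d ih =>
    obtain ⟨s, hv, hc⟩ := ih (k := k + 1) (by omega) (by omega) (by omega)
    obtain ⟨s', hv', hc', -⟩ := exists_coarsening one_pos s hv hnn (by omega)
    exact ⟨s', hv', by omega⟩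

mutual
def WTree.summaries : WTree → List Summ
  | .node _ cs => .leafAll :: (WTree.entryChoices cs).sections.map .expand
def WTree.entryChoices : List WTree → List (List (Option Summ))
  | [] => []
  | c :: cs => (none :: c.summaries.map some) :: WTree.entryChoices cs
end

lemma WTree.entryChoices_eq_map (cs : List WTree) :
    entryChoices cs = cs.map fun c => none :: c.summaries.map some := by
  induction cs with
  | nil => rfl
  | cons c cs ih => rw [entryChoices, ih, List.map_cons]

lemma mem_summaries_of_valid (s : Summ) {t : WTree} (hv : Valid t s) : s ∈ t.summaries := by
  induction s using Summ.induction generalizing t with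
  | leafAll =>
    cases t
    simp [WTree.summaries]
  | expand subs ih =>
    cases hv with
    | expand w cs _ h =>
      have h' :
          List.Forall₂ (fun o c => o ∈ subs ∧ ∀ s, o = some s → Valid c s) subs cs :=
        (List.forall₂_and_left _ _).2 ⟨fun _ ho => ho, List.Forall₂.flip h⟩
      simp only [WTree.summaries, WTree.entryChoices_eq_map, List.mem_cons, List.mem_map,
        List.mem_sections, List.forall₂_map_right_iff]
      refine .inr ⟨subs, h'.imp fun o c ⟨ho, hvo⟩ => ?_, rfl⟩
      rcases o with _ | s
      · exact .inl rfl
      · exact .inr ⟨s, ih s ho (hvo s rfl), rfl⟩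

def IsMaxEntropy (W : ℝ) (t : WTree) (k : ℕ) (s : Summ) : Prop :=
  Valid t s ∧ s.count = k ∧
    ∀ s', Valid t s' → s'.count = k → listEntropy W (parts t s') ≤ listEntropy W (parts t s)

lemma exists_isMaxEntropy (W : ℝ) {t : WTree} (hnn : t.NonnegWeights) {k : ℕ} (hk1 : 1 ≤ k)
    (hkn : k ≤ t.size) : ∃ s, IsMaxEntropy W t k s := by
  obtain ⟨s, ⟨hv, hc⟩, hmax⟩ := Set.exists_max_image {s | Valid t s ∧ s.count = k}
    (fun s => listEntropy W (parts t s))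
    (t.summaries.finite_toSet.subset fun s hs => mem_summaries_of_valid s hs.1)
    (exists_valid_count_eq hnn hk1 hkn)
  exact ⟨s, hv, hc, fun s' hv' hc' => hmax s' ⟨hv', hc'⟩⟩

/-! ## The exchange argument -/

def AllNearPrefix (s : Summ) : Prop :=
  ∀ subs, Occurs (.expand subs) s → subs.any Option.isNone →
    NearPrefix (subs.map Option.isNone)

def HasNearPrefixMaximizers (W : ℝ) (t : WTree) : Prop :=
  ∀ k, 1 ≤ k → k ≤ t.size → ∃ s, IsMaxEntropy W t k s ∧ AllNearPrefix s

lemma allNearPrefix_leafAll : AllNearPrefix .leafAll := fun _ h => by cases h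

lemma allNearPrefix_expand {subs : List (Option Summ)}
    (h : subs.any Option.isNone → NearPrefix (subs.map Option.isNone))
    (hsubs : ∀ s, some s ∈ subs → AllNearPrefix s) : AllNearPrefix (.expand subs) := by
  intro subs' hocc hany
  cases hocc with
  | refl => exact h hany
  | step s _ hmem hocc' => exact hsubs s hmem subs' hocc' hany

lemma nearPrefix_of_forall_not {l : List Bool}
    (h : ∀ a b b' : ℕ, a < b → b < b' → l[a]? = some false → l[b]? = some true →
      l[b']? = some true → False) : NearPrefix l := by
  classical
  by_cases hf : ∃ m : ℕ, l[m]? = some false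
  swap
  · push Not at hf
    refine .inl ⟨l.length, fun m hm => ?_⟩
    have := hf m
    rw [List.getElem?_eq_getElem hm] at this
    simpa [hm] using this
  have ha := Nat.find_spec hf
  have hmin : ∀ m < Nat.find hf, l[m]? ≠ some false := fun m hm => Nat.find_min hf hm
  set a := Nat.find hf
  have true_of_lt : ∀ m (hm : m < l.length), m < a → l[m] = true := fun m hm hma => by
    simpa [List.getElem?_eq_getElem hm] using hmin m hma
  have ne_a : ∀ m (hm : m < l.length), l[m] = true → m ≠ a := by
    rintro m hm hlm rfl
    simp [List.getElem?_eq_getElem hm, hlm] at ha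
  by_cases hj : ∃ j : ℕ, a < j ∧ l[j]? = some true
  · obtain ⟨j, haj, hj⟩ := hj
    have hjl : j < l.length := (List.getElem?_eq_some_iff.1 hj).1
    refine .inr ⟨a, j, haj, hjl, fun m hm => ⟨fun hlm => ?_, ?_⟩⟩
    · by_contra hne
      push Not at hne
      have hm' : l[m]? = some true := by rw [List.getElem?_eq_getElem hm, hlm]
      have := ne_a m hm hlm
      rcases lt_or_gt_of_ne hne.2 with hmj | hmj
      · exact h a m j (by omega) hmj ha hm' hj
      · exact h a j m haj hmj ha hj hm'
    · rintro (hma | rfl)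
      · exact true_of_lt m hm hma
      · simpa [List.getElem?_eq_getElem hm] using hj
  · push Not at hj
    refine .inl ⟨a, fun m hm => ⟨fun hlm => ?_, true_of_lt m hm⟩⟩
    by_contra hma
    exact hj m (by have := ne_a m hm hlm; omega) (by rw [List.getElem?_eq_getElem hm, hlm])

lemma exists_exchange_of_not_nearPrefix {subs : List (Option Summ)}
    (h : ¬ NearPrefix (subs.map Option.isNone)) :
    ∃ a b b' s, a < b ∧ b < b' ∧ subs.getD a none = some s ∧ subs.getD b none = none ∧
      subs.getD b' none = none ∧ b' < subs.length := by
  contrapose! h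
  refine nearPrefix_of_forall_not fun a b b' hab hbb' ha hb hb' => ?_
  simp only [List.getElem?_map, Option.map_eq_some_iff, Option.isNone_eq_false_iff,
    Option.isNone_iff_eq_none, exists_eq_right] at ha hb hb'
  obtain ⟨o, ha, ho⟩ := ha
  obtain ⟨s, rfl⟩ := Option.isSome_iff_exists.1 ho
  refine absurd (h a b b' s hab hbb' ?_ ?_ ?_) (not_le.2 (List.getElem?_eq_some_iff.1 hb').1) <;>
    simp [List.getD_eq_getElem?_getD, *]

lemma wt_getD_le_of_pairwise {cs : List WTree} (h : (cs.map WTree.wt).Pairwise (· ≤ ·))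
    {a b : ℕ} (hab : a < b) (hb : b < cs.length) :
    (cs.getD a default).wt ≤ (cs.getD b default).wt := by
  have := List.pairwise_iff_getElem.1 h a b (by simp; omega) (by simpa) hab
  rw [List.getD_eq_getElem _ _ (hab.trans hb), List.getD_eq_getElem _ _ hb]
  simpa using this

lemma groupIndex_le (j : ℕ) (o : Option Summ) : groupIndex j o ≤ j := by
  cases o <;> simp [groupIndex]

section Exchange

variable {W w : ℝ} {cs : List WTree}

/-- Child `a` trades its summary `s` for `o`, and `b` leaves the group as a single node; `b'`
keeps the group nonempty. -/
lemma exists_exchange {subs : List (Option Summ)} (hv : Valid (.node w cs) (.expand subs))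
    {a b b' : ℕ} {s : Summ} (hab : a < b) (hbb' : b < b')
    (ha : subs.getD a none = some s) (hb : subs.getD b none = none)
    (hb' : subs.getD b' none = none) (hb'l : b' < subs.length)
    (o : Option Summ) (ho : ∀ s', o = some s' → Valid (cs.getD a default) s')
    (hcount : optCount o + 1 = s.count)
    (hent : listEntropy W (parts (cs.getD a default) s) + entropyTerm W (otherWeight cs subs)
      ≤ optEntropy W (cs.getD a default) o + entropyTerm W (cs.getD b default).wt
        + entropyTerm W (otherWeight cs subs + groupWeight (cs.getD a default) o
          - (cs.getD b default).wt)) :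
    ∃ subs',
      (∀ s', some s' ∈ subs' → some s' ∈ subs ∨ o = some s' ∨ s' = .leafAll) ∧
      Valid (.node w cs) (.expand subs') ∧
      (Summ.expand subs').count = (Summ.expand subs).count ∧
      listEntropy W (parts (.node w cs) (.expand subs))
        ≤ listEntropy W (parts (.node w cs) (.expand subs')) ∧
      groupIndexSum subs' < groupIndexSum subs := by
  obtain ⟨hlen, -⟩ := valid_expand_iff.1 hv
  have hal : a < subs.length := by omega
  have hbl : b < (subs.set a o).length := by simp; omega
  have hlenA : cs.length = (subs.set a o).length := by simpa using hlen
  have hAb : (subs.set a o).getD b none = none := by rwa [List.getD_set_of_ne _ _ hab.ne]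
  have hany : subs.any Option.isNone := List.any_isNone_iff.2 ⟨b', hb'l, hb'⟩
  have hany' : ((subs.set a o).set b (some .leafAll)).any Option.isNone :=
    List.any_isNone_iff.2 ⟨b', by simpa using hb'l, by
      rwa [List.getD_set_of_ne _ _ hbb'.ne, List.getD_set_of_ne _ _ (hab.trans hbb').ne]⟩
  have cA := countList_set o hal
  have wA := otherWeight_set o hlen hal
  have eA := listEntropy_partsList_set o W hlen hal
  have mA := groupIndexSum_set o hal
  have c₂ := countList_set (some .leafAll) hbl
  have w₂ := otherWeight_set (some .leafAll) hlenA hbl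
  have e₂ := listEntropy_partsList_set (some .leafAll) W hlenA hbl
  have m₂ := groupIndexSum_set (some .leafAll) hbl
  simp only [ha, hAb, optCount.eq_1, optCount.eq_2, groupWeight.eq_1, groupWeight.eq_2,
    optEntropy.eq_1, optEntropy.eq_2, groupIndex.eq_1, groupIndex.eq_2, Summ.count.eq_1,
    parts_leafAll, listEntropy_singleton, add_zero] at cA wA eA mA c₂ w₂ e₂ m₂
  refine ⟨(subs.set a o).set b (some .leafAll), fun s' hs' => ?_,
    (hv.set o ho).set (some .leafAll) fun _ h => Option.some_inj.1 h ▸ .all _, ?_, ?_, ?_⟩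
  · rcases List.mem_or_eq_of_mem_set hs' with hs' | hs'
    · exact (List.mem_or_eq_of_mem_set hs').imp_right fun h => .inl h.symm
    · exact .inr (.inr (Option.some_inj.1 hs'))
  · simp only [Summ.count, hany, hany', if_true]
    omega
  · simp only [listEntropy_parts_expand, hany, hany', if_true]
    rw [show otherWeight cs ((subs.set a o).set b (some .leafAll))
      = otherWeight cs subs + groupWeight (cs.getD a default) o - (cs.getD b default).wt by
        linarith]
    linarith
  · have := groupIndex_le a o
    omega

lemma exists_forall₂_isMaxEntropy {subs : List (Option Summ)}
    (h : List.Forall₂ (fun c o => ∀ s, o = some s → Valid c s) cs subs)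
    (hopt : ∀ c ∈ cs, HasNearPrefixMaximizers W c) :
    ∃ subs', List.Forall₂ (fun c o => ∀ s, o = some s → Valid c s) cs subs' ∧
      subs'.any Option.isNone = subs.any Option.isNone ∧
      Summ.countList subs' = Summ.countList subs ∧
      otherWeight cs subs' = otherWeight cs subs ∧
      listEntropy W (partsList cs subs) ≤ listEntropy W (partsList cs subs') ∧
      ∀ s, some s ∈ subs' → AllNearPrefix s := by
  induction h with
  | nil => exact ⟨[], .nil, rfl, rfl, rfl, le_rfl, by simp⟩
  | @cons c o cs subs hco _ ih =>
    obtain ⟨subs', hF, hany, hcount, hweight, hent, hnp⟩ :=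
      ih fun c hc => hopt c (List.mem_cons_of_mem _ hc)
    rcases o with _ | s
    · exact ⟨none :: subs', .cons (by simp) hF, by simp [hany], by simp [Summ.countList, hcount],
        by simp [otherWeight, hweight], by simpa [partsList] using hent, by simpa using hnp⟩
    · obtain ⟨s', ⟨hv', hc', hmax⟩, hnp'⟩ :=
        hopt c List.mem_cons_self s.count s.one_le_count (count_le_size s (hco s rfl))
      refine ⟨some s' :: subs', .cons (fun _ h => Option.some_inj.1 h ▸ hv') hF, by simp [hany],
        by simp [Summ.countList, hcount, hc'], by simp [otherWeight, hweight], ?_, ?_⟩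
      · simp only [partsList, listEntropy_append]
        linarith [hmax s (hco s rfl) rfl]
      · simpa [hnp'] using hnp

/-- `o = none` puts a single-node child into the group; otherwise `o` is an optimal summary of
the child with one node fewer. -/
lemma exists_replacement (hW : 0 < W) {c : WTree} (hc : c.NonnegWeights)
    (hopt : HasNearPrefixMaximizers W c)
    {s : Summ} (hv : Valid c s) {u g : ℝ} (hcu : c.wt ≤ u) (hug : 2 * u ≤ g) :
    ∃ o, (∀ s', o = some s' → Valid c s' ∧ AllNearPrefix s') ∧
      optCount o + 1 = s.count ∧
      listEntropy W (parts c s) + entropyTerm W g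
        ≤ optEntropy W c o + entropyTerm W u + entropyTerm W (g + groupWeight c o - u) := by
  have hc0 := c.wt_nonneg hc
  rcases s.one_le_count.eq_or_lt with hs | hs
  · refine ⟨none, by simp, by simp [optCount.eq_1, hs], ?_⟩
    rw [parts_of_count_eq_one hv hs.symm, listEntropy_singleton, optEntropy.eq_1,
      groupWeight.eq_1, zero_add]
    exact entropyTerm_add_le_of_le hW hc0 hcu (by linarith)
  · obtain ⟨s₁, hv₁, hc₁, he₁⟩ := exists_coarsening hW s hv hc hs
    obtain ⟨s₂, ⟨hv₂, hc₂, hmax⟩, hnp₂⟩ :=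
      hopt s₁.count s₁.one_le_count (count_le_size s₁ hv₁)
    refine ⟨some s₂, fun _ h => Option.some_inj.1 h ▸ ⟨hv₂, hnp₂⟩, by
      rw [optCount.eq_2, hc₂, hc₁], ?_⟩
    rw [optEntropy.eq_2, groupWeight.eq_2, add_zero]
    have hsplit := div_le_entropyTerm_add_sub hW (by linarith) hug
    have : c.wt / W ≤ u / W := div_le_div_of_nonneg_right hcu hW.le
    linarith [hmax s₁ hv₁ rfl]

lemma exists_childwise_isMaxEntropy {subs : List (Option Summ)}
    (hv : Valid (.node w cs) (.expand subs))
    (hopt : ∀ c ∈ cs, HasNearPrefixMaximizers W c) :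
    ∃ subs', Valid (.node w cs) (.expand subs') ∧
      (Summ.expand subs').count = (Summ.expand subs).count ∧
      listEntropy W (parts (.node w cs) (.expand subs))
        ≤ listEntropy W (parts (.node w cs) (.expand subs')) ∧
      ∀ s, some s ∈ subs' → AllNearPrefix s := by
  cases hv with
  | expand _ _ _ h =>
    obtain ⟨subs', hF, hany, hcount, hweight, hent, hnp⟩ := exists_forall₂_isMaxEntropy h hopt
    refine ⟨subs', .expand w cs subs' hF, by simp only [Summ.count, hany, hcount], ?_, hnp⟩
    rw [listEntropy_parts_expand, listEntropy_parts_expand, hany, hweight]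
    linarith

lemma exists_allNearPrefix_of_children (hW : 0 < W) (hcs : ∀ c ∈ cs, c.NonnegWeights)
    (hsorted : (cs.map WTree.wt).Pairwise (· ≤ ·))
    (hopt : ∀ c ∈ cs, HasNearPrefixMaximizers W c)
    (subs : List (Option Summ)) (hv : Valid (.node w cs) (.expand subs))
    (hsubs : ∀ s, some s ∈ subs → AllNearPrefix s) :
    ∃ subs', Valid (.node w cs) (.expand subs') ∧
      (Summ.expand subs').count = (Summ.expand subs).count ∧
      listEntropy W (parts (.node w cs) (.expand subs))
        ≤ listEntropy W (parts (.node w cs) (.expand subs')) ∧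
      AllNearPrefix (.expand subs') := by
  induction h : groupIndexSum subs using Nat.strong_induction_on generalizing subs with
  | _ n ih =>
    by_cases hnp : subs.any Option.isNone → NearPrefix (subs.map Option.isNone)
    · exact ⟨subs, hv, rfl, le_rfl, allNearPrefix_expand hnp hsubs⟩
    push Not at hnp
    obtain ⟨-, hnp⟩ := hnp
    obtain ⟨a, b, b', s, hab, hbb', ha, hb, hb', hb'l⟩ := exists_exchange_of_not_nearPrefix hnp
    obtain ⟨hlen, hval⟩ := valid_expand_iff.1 hv
    have hcs_wt : ∀ c ∈ cs, 0 ≤ c.wt := fun c hc => c.wt_nonneg (hcs c hc)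
    have hmem : ∀ {j}, j < subs.length → cs.getD j default ∈ cs := fun hj =>
      List.getD_mem _ (hlen ▸ hj)
    have hpair := wt_add_wt_le_otherWeight hlen hcs_wt hbb'.ne hb hb' (by omega) hb'l
    have hbb'_wt := wt_getD_le_of_pairwise hsorted hbb' (hlen ▸ hb'l)
    obtain ⟨o, ho, hcount, hent⟩ := exists_replacement hW (hcs _ (hmem (by omega)))
      (hopt _ (hmem (by omega))) (hval a s ha)
      (wt_getD_le_of_pairwise hsorted hab (by omega)) (by linarith)
    obtain ⟨subs', hsubs', hv', hc', he', hlt⟩ := exists_exchange hv hab hbb' ha hb hb' hb'l o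
      (fun s' h => (ho s' h).1) hcount hent
    obtain ⟨subs'', hv'', hc'', he'', hnp''⟩ := ih _ (h ▸ hlt) subs' hv' (fun s' hs' => by
      rcases hsubs' s' hs' with hs' | hs' | rfl
      · exact hsubs s' hs'
      · exact (ho s' hs').2
      · exact allNearPrefix_leafAll) rfl
    exact ⟨subs'', hv'', hc''.trans hc', he'.trans he'', hnp''⟩

end Exchange

theorem hasNearPrefixMaximizers {W : ℝ} (hW : 0 < W) (t : WTree) (hnn : t.NonnegWeights)
    (hsorted : t.AllNodes fun _ cs => (cs.map WTree.wt).Pairwise (· ≤ ·)) :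
    HasNearPrefixMaximizers W t := by
  induction t using WTree.induction with
  | node w cs ih =>
    obtain ⟨hsorted_cs, hsorted_children⟩ := WTree.allNodes_node_iff.1 hsorted
    have hopt : ∀ c ∈ cs, HasNearPrefixMaximizers W c := fun c hc =>
      ih c hc (hnn.children c hc) (hsorted_children c hc)
    intro k hk1 hkn
    obtain ⟨_ | subs, hv, hc, hmax⟩ := exists_isMaxEntropy W hnn hk1 hkn
    · exact ⟨_, ⟨hv, hc, hmax⟩, allNearPrefix_leafAll⟩
    obtain ⟨subs₁, hv₁, hc₁, he₁, hnp₁⟩ := exists_childwise_isMaxEntropy hv hopt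
    obtain ⟨subs₂, hv₂, hc₂, he₂, hnp₂⟩ :=
      exists_allNearPrefix_of_children hW hnn.children hsorted_cs hopt subs₁ hv₁ hnp₁
    exact ⟨_, ⟨hv₂, by rw [hc₂, hc₁, hc], fun s' hv' hc' =>
      (hmax s' hv' hc').trans (he₁.trans he₂)⟩, hnp₂⟩

/-- Structural theorem: for every 1 ≤ k ≤ n there is a maximum entropy k-node summary
tree in which every group node `other_v` is a prefix or near-prefix of the children of
`v` sorted in nondecreasing order by subtree weight. -/
theorem structural_theorem (t : WTree)
    (hnn : WTree.AllNodes (fun w _ => 0 ≤ w) t)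
    (hsorted : WTree.AllNodes (fun _ cs => (cs.map WTree.wt).Pairwise (· ≤ ·)) t)
    (hWpos : 0 < WTree.wt t)
    (k : ℕ) (hk1 : 1 ≤ k) (hkn : k ≤ WTree.size t) :
    ∃ s : Summ, Valid t s ∧ Summ.count s = k ∧
      (∀ s' : Summ, Valid t s' → Summ.count s' = k →
        listEntropy (WTree.wt t) (parts t s') ≤ listEntropy (WTree.wt t) (parts t s)) ∧
      (∀ subs : List (Option Summ), Occurs (.expand subs) s →
        subs.any Option.isNone → NearPrefix (subs.map Option.isNone)) := by
  obtain ⟨s, ⟨hv, hc, hmax⟩, hnp⟩ := hasNearPrefixMaximizers hWpos t hnn hsorted k hk1 hkn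
  exact ⟨s, hv, hc, hmax, hnp⟩
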